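/- Let σ be a regular infinite cardinal. Suppose {A_α : α < κ} is a point-finite family of sets satisfying |A_α| ≤ σ⁺ for each α and |A_α ∩ A_β| ≤ σ for each pair of distinct α, β < κ. Then there are sets A'_α ⊆ A_α with |A'_α| ≤ σ for each α such that the family {A_α \ A'_α : α < κ} is pairwise disjoint. -/

import Mathlib

/-!
Join `α ≠ β` by an edge when `A α` and `A β` meet. By point-finiteness every vertex has at most
`|A α| · ℵ₀ ≤ σ⁺` neighbours, so every connected component has at most `σ⁺` vertices and can be
labelled injectively by the initial ordinal of `σ⁺`. Then each `α` has at most `σ` neighbours of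
smaller label; removing from `A α` its intersections with those costs at most `σ · σ = σ` points,
and of two meeting sets the one with the larger label has given up the common points.
-/

set_option autoImplicit false
open Cardinal

universe u v

/-- A family `⟨A_α⟩_{α ∈ ι}` of sets is point-`< τ` if for every index set `I ⊆ ι` of
cardinality `τ` the intersection `⋂_{α ∈ I} A_α` is empty. -/
def PointLt {ι : Type u} {X : Type v} (τ : Cardinal.{u}) (A : ι → Set X) : Prop :=
  ∀ I : Set ι, Cardinal.mk I = τ → ⋂ α ∈ I, A α = ∅

theorem PointLt.finite_setOf_mem {ι : Type u} {X : Type v} {A : ι → Set X}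
    (hA : PointLt ℵ₀ A) (x : X) : {α | x ∈ A α}.Finite := by
  by_contra hinf
  obtain ⟨I, hI, hIcard⟩ :=
    le_mk_iff_exists_subset.1 (aleph0_le_mk_iff.2 (Set.infinite_coe_iff.2 hinf))
  have hx : x ∈ ⋂ α ∈ I, A α := Set.mem_iInter₂.2 fun α hα => hI hα
  rw [hA I hIcard] at hx
  exact hx

namespace Cardinal

theorem mk_biUnion_le_mul {ι α : Type u} {f : ι → Set α} {s : Set ι} {c : Cardinal.{u}}
    (hf : ∀ i ∈ s, #(f i) ≤ c) : #(⋃ i ∈ s, f i) ≤ #s * c :=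
  (mk_biUnion_le f s).trans (mul_le_mul_right (ciSup_le' fun i : s => hf i.1 i.2) _)

theorem exists_injective_prod_of_mk_fiber_le {α β : Type u} {γ : Type*} (π : α → γ)
    (h : ∀ c, #(π ⁻¹' {c}) ≤ #β) : ∃ g : α → β, Function.Injective fun a => (π a, g a) := by
  let e : ∀ c, π ⁻¹' {c} ↪ β := fun c => ((le_def _ _).1 (h c)).some
  have key : ∀ c a (ha : π a = c), e (π a) ⟨a, rfl⟩ = e c ⟨a, ha⟩ := by
    rintro _ a rfl
    rfl
  refine ⟨fun a => e (π a) ⟨a, rfl⟩, fun a b hab => ?_⟩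
  obtain ⟨hπ, hg⟩ := Prod.ext_iff.1 hab
  dsimp only at hπ hg
  rw [key (π b) a hπ] at hg
  exact congrArg Subtype.val ((e _).injective hg)

end Cardinal

namespace SimpleGraph

variable {V : Type u} (G : SimpleGraph V)

theorem mk_setOf_reachable_le {κ : Cardinal.{u}} (hκ : ℵ₀ ≤ κ)
    (h : ∀ v, #(G.neighborSet v) ≤ κ) (v : V) : #{w | G.Reachable v w} ≤ κ := by
  let ball : ℕ → V → Set V := fun n v => {w | ∃ p : G.Walk v w, p.length ≤ n}
  have hball : ∀ n v, #(ball n v) ≤ κ := by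
    intro n
    induction n with
    | zero =>
      intro v
      have : ball 0 v ⊆ {v} := by
        rintro w ⟨p, hp⟩
        exact (Walk.eq_of_length_eq_zero (Nat.le_zero.1 hp)).symm
      calc #(ball 0 v) ≤ #({v} : Set V) := mk_le_mk_of_subset this
        _ = 1 := mk_singleton v
        _ ≤ κ := one_le_aleph0.trans hκ
    | succ n ih =>
      intro v
      have : ball (n + 1) v ⊆ insert v (⋃ u ∈ G.neighborSet v, ball n u) := by
        rintro w ⟨p, hp⟩
        cases p with
        | nil => exact Set.mem_insert _ _
        | cons hadj q =>
          exact Set.mem_insert_of_mem _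
            (Set.mem_biUnion hadj ⟨q, by simpa [Walk.length_cons] using hp⟩)
      calc #(ball (n + 1) v) ≤ #(⋃ u ∈ G.neighborSet v, ball n u) + 1 :=
            (mk_le_mk_of_subset this).trans mk_insert_le
        _ ≤ #(G.neighborSet v) * κ + 1 := by grw [mk_biUnion_le_mul fun u _ => ih u]
        _ ≤ κ * κ + 1 := by grw [h v]
        _ = κ := by rw [mul_eq_self hκ, add_one_eq hκ]
  refine mk_subtype_le_of_countable_eventually_mem (l := Filter.atTop) (f := fun n => ball n v)
    (fun w ⟨p⟩ => ?_) (fun n => hball n v)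
  exact Filter.eventually_atTop.2 ⟨p.length, fun n hn => ⟨p, hn⟩⟩

theorem exists_labelling_few_smaller_neighbors {σ : Cardinal.{u}} (hσ : ℵ₀ ≤ σ)
    (h : ∀ v, #(G.neighborSet v) ≤ Order.succ σ) :
    ∃ g : V → (Order.succ σ).ord.ToType,
      (∀ v w, G.Adj v w → g v ≠ g w) ∧ ∀ v, #{w | G.Adj v w ∧ g w < g v} ≤ σ := by
  have hcomp : ∀ c, #(G.connectedComponentMk ⁻¹' {c}) ≤ #(Order.succ σ).ord.ToType := by
    refine ConnectedComponent.ind fun v => ?_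
    have hfiber :
        G.connectedComponentMk ⁻¹' {G.connectedComponentMk v} = {w | G.Reachable v w} := by
      ext w
      simp [ConnectedComponent.eq, reachable_comm]
    rw [hfiber, mk_ord_toType]
    exact G.mk_setOf_reachable_le (hσ.trans (Order.le_succ σ)) h v
  obtain ⟨g, hg⟩ := exists_injective_prod_of_mk_fiber_le _ hcomp
  have hinj : ∀ v w, G.Reachable v w → g v = g w → v = w := fun v w hvw hg' =>
    hg (Prod.ext (ConnectedComponent.eq.2 hvw) hg')
  refine ⟨g, fun v w hvw => mt (hinj v w hvw.reachable) hvw.ne, fun v => ?_⟩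
  have : Function.Injective fun w : {w | G.Adj v w ∧ g w < g v} =>
      (⟨g w, w.2.2⟩ : Set.Iio (g v)) := by
    rintro ⟨w, hw⟩ ⟨w', hw'⟩ hww'
    exact Subtype.ext <|
      hinj w w' (hw.1.reachable.symm.trans hw'.1.reachable) (congrArg Subtype.val hww')
  have hIio : #(Set.Iio (g v)) < Order.succ σ := by simpa using mk_Iio_lt (g v) (by simp)
  exact Order.lt_succ_iff.1 ((mk_le_of_injective this).trans_lt hIio)

end SimpleGraph

def intersectionGraph {ι X : Type*} (A : ι → Set X) : SimpleGraph ι where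
  Adj α β := α ≠ β ∧ (A α ∩ A β).Nonempty
  symm := ⟨fun _ _ h => ⟨h.1.symm, Set.inter_comm (A _) _ ▸ h.2⟩⟩
  loopless := ⟨fun _ h => h.1 rfl⟩

theorem mk_neighborSet_intersectionGraph_le {ι X : Type u} {A : ι → Set X}
    (hA : ∀ x, {α | x ∈ A α}.Finite) (α : ι) :
    #((intersectionGraph A).neighborSet α) ≤ #(A α) * ℵ₀ := by
  have hsub : (intersectionGraph A).neighborSet α ⊆ ⋃ x ∈ A α, {β | x ∈ A β} := by
    rintro β ⟨-, x, hxα, hxβ⟩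
    exact Set.mem_biUnion hxα hxβ
  exact (mk_le_mk_of_subset hsub).trans (mk_biUnion_le_mul fun x _ => (hA x).lt_aleph0.le)

theorem exists_disjoint_diff_of_pointFinite {ι X : Type u} {σ : Cardinal.{u}} (hσ : ℵ₀ ≤ σ)
    {A : ι → Set X} (hpf : ∀ x, {α | x ∈ A α}.Finite)
    (hcard : ∀ α, #(A α) ≤ Order.succ σ) (hint : ∀ α β, α ≠ β → #↥(A α ∩ A β) ≤ σ) :
    ∃ A' : ι → Set X, (∀ α, A' α ⊆ A α ∧ #(A' α) ≤ σ) ∧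
      ∀ α β, α ≠ β → Disjoint (A α \ A' α) (A β \ A' β) := by
  let G := intersectionGraph A
  have hdeg : ∀ α, #(G.neighborSet α) ≤ Order.succ σ := fun α =>
    (mk_neighborSet_intersectionGraph_le hpf α).trans <| by
      grw [hcard α, mul_aleph0_eq (hσ.trans (Order.le_succ σ))]
  obtain ⟨g, hg_adj, hg_lower⟩ := G.exists_labelling_few_smaller_neighbors hσ hdeg
  refine ⟨fun α => ⋃ β ∈ {β | G.Adj α β ∧ g β < g α}, A α ∩ A β, fun α => ⟨?_, ?_⟩, ?_⟩
  · exact Set.iUnion₂_subset fun β _ => Set.inter_subset_left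
  · calc _ ≤ #{β | G.Adj α β ∧ g β < g α} * σ := mk_biUnion_le_mul fun β hβ => hint α β hβ.1.1
      _ ≤ σ * σ := by grw [hg_lower α]
      _ = σ := mul_eq_self hσ
  · intro α β hne
    refine Set.disjoint_left.2 fun x ⟨hxα, hxα'⟩ ⟨hxβ, hxβ'⟩ => ?_
    have hadj : G.Adj α β := ⟨hne, x, hxα, hxβ⟩
    rcases (hg_adj α β hadj).lt_or_gt with hlt | hlt
    · exact hxβ' (Set.mem_biUnion ⟨hadj.symm, hlt⟩ ⟨hxβ, hxα⟩)
    · exact hxα' (Set.mem_biUnion ⟨hadj, hlt⟩ ⟨hxα, hxβ⟩)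

/-- Let `σ` be a regular infinite cardinal.  If `⟨A_α⟩` is a point-finite family of sets
with `|A_α| ≤ σ⁺` and `|A_α ∩ A_β| ≤ σ` for distinct `α, β`, then one can remove a set of
size at most `σ` from each `A_α` so that the family becomes pairwise disjoint. -/
theorem pointFinite_refine_disjoint {ι : Type u} {X : Type v}
    (σ : Cardinal.{v}) (hσ : σ.IsRegular)
    (A : ι → Set X)
    (hpf : PointLt ℵ₀ A)
    (hcard : ∀ α, Cardinal.mk (A α) ≤ Order.succ σ)
    (hint : ∀ α β, α ≠ β → Cardinal.mk ↥(A α ∩ A β) ≤ σ) :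
    ∃ A' : ι → Set X, (∀ α, A' α ⊆ A α ∧ Cardinal.mk (A' α) ≤ σ) ∧
      ∀ α β, α ≠ β → Disjoint (A α \ A' α) (A β \ A' β) := by
  -- The graph argument needs the indices and the points in one universe.
  obtain ⟨B, hB, hBdisj⟩ := exists_disjoint_diff_of_pointFinite (ι := ULift.{v} ι)
    (X := ULift.{u} X) (σ := lift.{u} σ) (by simpa using hσ.aleph0_le)
    (A := fun α => ULift.down ⁻¹' A α.down)
    (fun x => (hpf.finite_setOf_mem x.down).preimage ULift.down_injective.injOn)
    (fun α => by rw [mk_preimage_down, ← lift_succ, lift_le]; exact hcard α.down)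
    (fun α β hne => by simpa [← Set.preimage_inter] using hint _ _ (ULift.down_injective.ne hne))
  refine ⟨fun α => ULift.up ⁻¹' B ⟨α⟩, fun α => ⟨fun x hx => (hB ⟨α⟩).1 hx, ?_⟩,
    fun α β hne => (hBdisj ⟨α⟩ ⟨β⟩ (ULift.up_injective.ne hne)).preimage ULift.up⟩
  have hBα := (hB ⟨α⟩).2
  rwa [show B ⟨α⟩ = ULift.down ⁻¹' (ULift.up ⁻¹' B ⟨α⟩) from rfl, mk_preimage_down,
    lift_le] at hBα
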